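/- arXiv:2512.19884 — 3 statements merged into one kernel-verified Lean document; each statement's English description precedes it below -/
import Mathlib

section
/- Let X be a finitely supported random variable on G = 𝔽₂ⁿ and let V₁, V₂ ⊆ G be subspaces. Then H[π_{V₁}(X)] + H[π_{V₂}(X)] ≥ H[π_{V₁ + V₂}(X)] + H[π_{V₁ ∩ V₂}(X)]. -/
open Real Pointwise

noncomputable section

abbrev Fvec (n : ℕ) : Type := Fin n → ZMod 2

/-- Shannon entropy (natural log) of a finitely supported distribution. -/
def ent {A : Type*} (p : A → ℝ) : ℝ := ∑ᶠ a, Real.negMulLog (p a)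

/-- `p` is a (finitely supported) probability distribution. -/
def IsDist {A : Type*} (p : A → ℝ) : Prop := (∀ a, 0 ≤ p a) ∧ ∑ᶠ a, p a = 1

/-- Pushforward of a distribution along a map: the distribution of `f(X)` for `X ∼ p`. -/
def push {A B : Type*} (f : A → B) (p : A → ℝ) : B → ℝ := fun b => ∑ᶠ a ∈ f ⁻¹' {b}, p a

/-- Joint distribution of a pair of independent random variables. -/
def prodDist {A B : Type*} (p : A → ℝ) (q : B → ℝ) : A × B → ℝ := fun z => p z.1 * q z.2

/-- Distribution of `X + Y` for independent `X ∼ p`, `Y ∼ q`. -/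
def conv {A : Type*} [AddGroup A] (p q : A → ℝ) : A → ℝ := fun z => ∑ᶠ x, p x * q (z - x)

/-- The distribution of `X` conditioned on `U = b`, where `r` is the joint distribution of `(X, U)`. -/
def fiber {A B : Type*} (r : A × B → ℝ) (b : B) : A → ℝ := fun a => r (a, b) / push Prod.snd r b

/-- Conditional entropy `H[X | U]` of a joint distribution `r` of `(X, U)`. -/
def condEnt {A B : Type*} (r : A × B → ℝ) : ℝ := ∑ᶠ b, push Prod.snd r b * ent (fiber r b)

/-- Doubling mass `s[X ; Y]` (of independent copies with distributions `p`, `q`). -/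
def sDouble {A : Type*} [AddGroup A] (p q : A → ℝ) : ℝ := ent p + ent q - ent (conv p q)

/-- Conditional doubling mass `s[X | U ; Y | W] = 𝔼_{u ∼ U, w ∼ W} s[X_u ; Y_w]`,
where `r1`, `r2` are the joint distributions of `(X, U)` and `(Y, W)`. -/
def sCond {A U W : Type*} [AddGroup A] (r1 : A × U → ℝ) (r2 : A × W → ℝ) : ℝ :=
  ∑ᶠ u, ∑ᶠ w, push Prod.snd r1 u * push Prod.snd r2 w * sDouble (fiber r1 u) (fiber r2 w)

/-- Conditional mutual information `I[A : B | S]` of a joint distribution of `(A, B, S)`. -/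
def condMI {A B S : Type*} (r : A × B × S → ℝ) : ℝ :=
  ent (push (fun z => (z.1, z.2.2)) r) + ent (push (fun z => z.2) r)
    - ent r - ent (push (fun z => z.2.2) r)

/-- Uniform distribution on a set. -/
def unifOn {A : Type*} (s : Set A) : A → ℝ := s.indicator fun _ => (Nat.card s : ℝ)⁻¹

/-- Entropic Ruzsa distance `d[X ; Y]`. -/
def dRuzsa {A : Type*} [AddGroup A] (p q : A → ℝ) : ℝ := ent (conv p q) - ent p / 2 - ent q / 2

/-- Joint distribution of `(X, X + Y)` for independent `X ∼ p`, `Y ∼ q`. -/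
def jointSum {A : Type*} [AddGroup A] (p q : A → ℝ) : A × A → ℝ :=
  push (fun z : A × A => (z.1, z.1 + z.2)) (prodDist p q)

/-- Joint distribution of `(X, π_V(X))`. -/
def selfProj {n : ℕ} (V : Submodule (ZMod 2) (Fvec n)) (p : Fvec n → ℝ) :
    Fvec n × (Fvec n ⧸ V) → ℝ := push (fun x => (x, V.mkQ x)) p

/-- Joint distribution of independent `(X₁, X₂, Y₁, Y₂)` with `X₁, X₂ ∼ p` and `Y₁, Y₂ ∼ q`. -/
def quad {A : Type*} (p q : A → ℝ) : A × A × A × A → ℝ :=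
  fun z => p z.1 * p z.2.1 * q z.2.2.1 * q z.2.2.2

/-- Distribution of `X₁ + ⋯ + X_k` for independent `Xᵢ ∼ p i`. -/
def indepSum {A : Type*} [AddCommGroup A] (k : ℕ) (p : Fin k → A → ℝ) : A → ℝ :=
  push (fun x : Fin k → A => ∑ i, x i) (fun x => ∏ i, p i (x i))

/-- Statement `A(η, L, c)` from the paper. -/
def StA (η L c : ℝ) : Prop :=
  ∀ (n : ℕ) (p q : Fvec n → ℝ), IsDist p → IsDist q →
    ent (conv p q) ≤ (1 - η) * (ent p + ent q) →
    ∃ V : Submodule (ZMod 2) (Fvec n),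
      ent (unifOn (V : Set (Fvec n))) ≤ L * (ent p + ent q) ∧
      ent (push V.mkQ p) + ent (push V.mkQ q) ≤ (1 - c) * (ent p + ent q)

/-- Statement `B(η, ε, L)` from the paper. -/
def StB (η ε L : ℝ) : Prop :=
  ∀ (n : ℕ) (p q : Fvec n → ℝ), IsDist p → IsDist q →
    ∃ V : Submodule (ZMod 2) (Fvec n),
      ent (unifOn (V : Set (Fvec n))) ≤ L * (ent p + ent q) ∧
      ent (conv (push V.mkQ p) (push V.mkQ q)) ≥
        (1 - η) * (ent (push V.mkQ p) + ent (push V.mkQ q)) - ε * (ent p + ent q)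


section SmAux
open Finset
variable {A B C : Type*}

lemma sm_ent_eq [Fintype A] (p : A → ℝ) : ent p = ∑ a, Real.negMulLog (p a) :=
  finsum_eq_sum_of_fintype _

lemma sm_push_apply [Fintype A] [DecidableEq B] (f : A → B) (p : A → ℝ) (b : B) :
    push f p b = ∑ a, if f a = b then p a else 0 := by
  classical
  rw [show push f p b = ∑ᶠ a ∈ f ⁻¹' {b}, p a from rfl, finsum_mem_def,
    finsum_eq_sum_of_fintype]
  apply Finset.sum_congr rfl
  intro a _
  by_cases h : f a = b <;>
    simp [Set.indicator_apply, Set.mem_preimage, Set.mem_singleton_iff, h]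

lemma sm_push_nonneg [Fintype A] (f : A → B) (p : A → ℝ) (hp : ∀ a, 0 ≤ p a) (b : B) :
    0 ≤ push f p b := by
  classical
  rw [sm_push_apply]
  exact Finset.sum_nonneg fun a _ => by by_cases h : f a = b <;> simp [h, hp a]

lemma sm_sum_push [Fintype A] [Fintype B] (f : A → B) (p : A → ℝ) :
    ∑ b, push f p b = ∑ a, p a := by
  classical
  simp only [sm_push_apply]
  rw [Finset.sum_comm]
  apply Finset.sum_congr rfl
  intro a _
  simp [Finset.sum_ite_eq]

lemma sm_push_push [Fintype A] [Fintype B] [Fintype C] (f : A → B) (g : B → C) (p : A → ℝ) :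
    push g (push f p) = push (g ∘ f) p := by
  classical
  funext c
  rw [sm_push_apply, sm_push_apply]
  simp only [sm_push_apply, Function.comp]
  calc ∑ b, (if g b = c then ∑ a, if f a = b then p a else 0 else 0)
      = ∑ b, ∑ a, (if f a = b then (if g b = c then p a else 0) else 0) := by
        apply Finset.sum_congr rfl
        intro b _
        by_cases h : g b = c <;> simp [h]
    _ = ∑ a, ∑ b, (if f a = b then (if g b = c then p a else 0) else 0) := Finset.sum_comm
    _ = ∑ a, (if g (f a) = c then p a else 0) := by
        apply Finset.sum_congr rfl
        intro a _
        rw [Finset.sum_ite_eq]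
        simp

lemma sm_negMulLog_sum_le {ι : Type*} [Fintype ι] (p : ι → ℝ) (h0 : ∀ i, 0 ≤ p i) :
    Real.negMulLog (∑ i, p i) ≤ ∑ i, Real.negMulLog (p i) := by
  set S := ∑ i, p i with hS
  have key : ∀ i, -(p i * Real.log S) ≤ Real.negMulLog (p i) := by
    intro i
    rcases eq_or_lt_of_le (h0 i) with h | h
    · simp [Real.negMulLog, ← h]
    · have hpi : p i ≤ S := Finset.single_le_sum (fun j _ => h0 j) (Finset.mem_univ i)
      have hlog : Real.log (p i) ≤ Real.log S := Real.log_le_log h hpi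
      have := mul_le_mul_of_nonneg_left hlog (le_of_lt h)
      rw [Real.negMulLog, neg_mul]
      linarith
  have h1 : ∑ i, -(p i * Real.log S) = -(S * Real.log S) := by
    rw [Finset.sum_neg_distrib, ← Finset.sum_mul]
  have h2 : ∑ i, -(p i * Real.log S) ≤ ∑ i, Real.negMulLog (p i) :=
    Finset.sum_le_sum fun i _ => key i
  rw [Real.negMulLog, neg_mul]
  linarith

lemma sm_ent_push_le [Fintype A] [Fintype B] (f : A → B) (p : A → ℝ) (hp0 : ∀ a, 0 ≤ p a) :
    ent (push f p) ≤ ent p := by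
  classical
  have key : ∀ b, push f p b = ∑ i : {i // f i = b}, p i.1 := by
    intro b
    rw [sm_push_apply, ← Finset.sum_filter]
    exact Finset.sum_subtype _ (by simp) _
  rw [sm_ent_eq, sm_ent_eq, ← Fintype.sum_fiberwise f (fun a => Real.negMulLog (p a))]
  apply Finset.sum_le_sum
  intro b _
  rw [key b]
  exact sm_negMulLog_sum_le _ (fun i => hp0 i.1)

lemma sm_factor {G P E : Type*} [Nonempty E] (pr : G → P) (φ : G → E)
    (h : ∀ x y, pr x = pr y → φ x = φ y) : ∃ ψ : P → E, ∀ x, ψ (pr x) = φ x := by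
  classical
  refine ⟨fun b => if hb : ∃ x, pr x = b then φ hb.choose else Classical.arbitrary E,
    fun x => ?_⟩
  have hx : ∃ y, pr y = pr x := ⟨x, rfl⟩
  simp only [dif_pos hx]
  exact h _ _ hx.choose_spec


lemma sm_gibbs {A B C : Type*} [Fintype A] [Fintype B] [Fintype C]
    (q : A × B → ℝ) (hq0 : ∀ z, 0 ≤ q z) (hq1 : ∑ z, q z = 1)
    (u : A → C) (v : B → C) (hcc : ∀ a b, q (a, b) ≠ 0 → u a = v b) :
    ent (push (fun z => u z.1) q) + ent q ≤
      ent (push Prod.fst q) + ent (push Prod.snd q) := by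
  classical
  set qA : A → ℝ := fun a => ∑ b, q (a, b) with hqA
  set qB : B → ℝ := fun b => ∑ a, q (a, b) with hqB
  set qC : C → ℝ := fun c => ∑ z : A × B, if u z.1 = c then q z else 0 with hqC
  have qA0 : ∀ a, 0 ≤ qA a := fun a => Finset.sum_nonneg fun b _ => hq0 _
  have qB0 : ∀ b, 0 ≤ qB b := fun b => Finset.sum_nonneg fun a _ => hq0 _
  have qC0 : ∀ c, 0 ≤ qC c := fun c => Finset.sum_nonneg fun z _ => by
    by_cases h : u z.1 = c <;> simp [h, hq0 z]
  -- pointwise bounds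
  have hle_qA : ∀ z : A × B, q z ≤ qA z.1 := fun z => by
    have : q (z.1, z.2) ≤ ∑ b, q (z.1, b) :=
      Finset.single_le_sum (f := fun b => q (z.1, b)) (fun b _ => hq0 _) (Finset.mem_univ z.2)
    simpa using this
  have hle_qB : ∀ z : A × B, q z ≤ qB z.2 := fun z => by
    have : q (z.1, z.2) ≤ ∑ a, q (a, z.2) :=
      Finset.single_le_sum (f := fun a => q (a, z.2)) (fun a _ => hq0 _) (Finset.mem_univ z.1)
    simpa using this
  have hle_qC : ∀ z : A × B, q z ≤ qC (u z.1) := fun z => by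
    have : (if u z.1 = u z.1 then q z else 0) ≤ qC (u z.1) :=
      Finset.single_le_sum (f := fun w : A × B => if u w.1 = u z.1 then q w else 0)
        (fun w _ => by by_cases h : u w.1 = u z.1 <;> simp [h, hq0 w])
        (Finset.mem_univ z)
    simpa using this
  -- push identities
  have pushA : ∀ a, push Prod.fst q a = qA a := by
    intro a
    rw [sm_push_apply, Fintype.sum_prod_type]
    have : ∀ x, (∑ y, if (x, y).1 = a then q (x, y) else 0)
        = if x = a then qA x else 0 := by
      intro x
      by_cases h : x = a <;> simp [h, hqA]
    simp only [this]
    rw [Finset.sum_ite_eq']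
    simp
  have pushB : ∀ b, push Prod.snd q b = qB b := by
    intro b
    rw [sm_push_apply, Fintype.sum_prod_type, Finset.sum_comm]
    have : ∀ y, (∑ x, if (x, y).2 = b then q (x, y) else 0)
        = if y = b then qB y else 0 := by
      intro y
      by_cases h : y = b <;> simp [h, hqB]
    simp only [this]
    rw [Finset.sum_ite_eq']
    simp
  have pushC : ∀ c, push (fun z : A × B => u z.1) q c = qC c := fun c => sm_push_apply _ _ _
  -- marginal descriptions of qC
  have qCA : ∀ c, qC c = ∑ a, if u a = c then qA a else 0 := by
    intro c
    rw [hqC]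
    simp only []
    rw [Fintype.sum_prod_type]
    apply Finset.sum_congr rfl
    intro x _
    by_cases h : u x = c <;> simp [h, hqA]
  have qCB : ∀ c, qC c = ∑ b, if v b = c then qB b else 0 := by
    intro c
    have step : qC c = ∑ z : A × B, if v z.2 = c then q z else 0 := by
      rw [hqC]
      simp only []
      apply Finset.sum_congr rfl
      intro z _
      by_cases hz : q z = 0
      · simp [hz]
      · rw [hcc z.1 z.2 (by rwa [Prod.mk.eta])]
    rw [step, Fintype.sum_prod_type, Finset.sum_comm]
    apply Finset.sum_congr rfl
    intro y _
    by_cases h : v y = c <;> simp [h, hqB]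
  have sumqC : ∑ c, qC c = 1 := by
    rw [← hq1, hqC]
    simp only []
    rw [Finset.sum_comm]
    apply Finset.sum_congr rfl
    intro z _
    simp [Finset.sum_ite_eq]
  -- reference measure
  set m : A × B → ℝ :=
    fun z => if u z.1 = v z.2 then qA z.1 * qB z.2 / qC (u z.1) else 0 with hm
  have hm_pos : ∀ z : A × B, u z.1 = v z.2 → m z = qA z.1 * qB z.2 / qC (u z.1) := by
    intro z h
    rw [hm]
    simp only []
    rw [if_pos h]
  have hm_neg : ∀ z : A × B, ¬ u z.1 = v z.2 → m z = 0 := by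
    intro z h
    rw [hm]
    simp only []
    rw [if_neg h]
  have m0 : ∀ z, 0 ≤ m z := by
    intro z
    by_cases h : u z.1 = v z.2
    · rw [hm_pos z h]
      exact div_nonneg (mul_nonneg (qA0 _) (qB0 _)) (qC0 _)
    · rw [hm_neg z h]
  have star : ∀ z, Real.negMulLog (q z) ≤ -(q z * Real.log (m z)) + (m z - q z) := by
    intro z
    rcases eq_or_lt_of_le (hq0 z) with hz | hz
    · simp [Real.negMulLog, ← hz, m0 z]
    · have huv : u z.1 = v z.2 := hcc z.1 z.2 (by rw [Prod.mk.eta]; exact ne_of_gt hz)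
      have hA : 0 < qA z.1 := lt_of_lt_of_le hz (hle_qA z)
      have hB : 0 < qB z.2 := lt_of_lt_of_le hz (hle_qB z)
      have hC : 0 < qC (u z.1) := lt_of_lt_of_le hz (hle_qC z)
      have hmz : 0 < m z := by
        rw [hm_pos z huv]
        exact div_pos (mul_pos hA hB) hC
      have hlog := Real.log_le_sub_one_of_pos (div_pos hmz hz)
      rw [Real.log_div (ne_of_gt hmz) (ne_of_gt hz)] at hlog
      have h2 : q z * (Real.log (m z) - Real.log (q z)) ≤ q z * (m z / q z - 1) :=
        mul_le_mul_of_nonneg_left hlog (le_of_lt hz)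
      have h3 : q z * (m z / q z - 1) = m z - q z := by field_simp
      rw [Real.negMulLog, neg_mul]
      nlinarith [h2, h3]
  have logm : ∀ z, q z * Real.log (m z) =
      q z * (Real.log (qA z.1) + Real.log (qB z.2) - Real.log (qC (u z.1))) := by
    intro z
    rcases eq_or_lt_of_le (hq0 z) with hz | hz
    · rw [← hz]; ring
    · have huv : u z.1 = v z.2 := hcc z.1 z.2 (by rw [Prod.mk.eta]; exact ne_of_gt hz)
      have hA : 0 < qA z.1 := lt_of_lt_of_le hz (hle_qA z)
      have hB : 0 < qB z.2 := lt_of_lt_of_le hz (hle_qB z)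
      have hC : 0 < qC (u z.1) := lt_of_lt_of_le hz (hle_qC z)
      rw [hm_pos z huv,
        Real.log_div (ne_of_gt (mul_pos hA hB)) (ne_of_gt hC),
        Real.log_mul (ne_of_gt hA) (ne_of_gt hB)]
  have summ : ∑ z, m z ≤ 1 := by
    have key : ∑ z, m z =
        ∑ c, (∑ a, if u a = c then qA a else 0) * (∑ b, if v b = c then qB b else 0) / qC c := by
      have expand : ∀ c,
          (∑ a, if u a = c then qA a else 0) * (∑ b, if v b = c then qB b else 0) / qC c
          = ∑ z : A × B, (if u z.1 = c ∧ v z.2 = c then qA z.1 * qB z.2 / qC c else 0) := by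
        intro c
        rw [Finset.sum_mul_sum, Fintype.sum_prod_type, Finset.sum_div]
        apply Finset.sum_congr rfl
        intro a _
        rw [Finset.sum_div]
        apply Finset.sum_congr rfl
        intro b _
        by_cases h1 : u a = c <;> by_cases h2 : v b = c <;> simp [h1, h2]
      simp only [expand]
      rw [Finset.sum_comm]
      apply Finset.sum_congr rfl
      intro z _
      by_cases huv : u z.1 = v z.2
      · rw [Finset.sum_eq_single (u z.1)]
        · rw [if_pos ⟨rfl, huv.symm⟩, hm_pos z huv]
        · intro c _ hc
          rw [if_neg]
          rintro ⟨h1, -⟩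
          exact hc h1.symm
        · intro h
          exact absurd (Finset.mem_univ _) h
      · rw [Finset.sum_eq_zero, hm_neg z huv]
        intro c _
        rw [if_neg]
        rintro ⟨h1, h2⟩
        exact huv (h1.trans h2.symm)
    rw [key]
    have hterm : ∀ c,
        (∑ a, if u a = c then qA a else 0) * (∑ b, if v b = c then qB b else 0) / qC c ≤ qC c := by
      intro c
      rw [← qCA c, ← qCB c]
      rcases eq_or_lt_of_le (qC0 c) with h | h
      · rw [← h]; simp
      · rw [mul_div_assoc, div_self (ne_of_gt h), mul_one]
    calc ∑ c, (∑ a, if u a = c then qA a else 0) * (∑ b, if v b = c then qB b else 0) / qC c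
        ≤ ∑ c, qC c := Finset.sum_le_sum fun c _ => hterm c
      _ = 1 := sumqC
  -- entropy identities as sums over z
  have entA : ent (push Prod.fst q) = ∑ z : A × B, -(q z * Real.log (qA z.1)) := by
    rw [sm_ent_eq,
      show (∑ z : A × B, -(q z * Real.log (qA z.1)))
        = ∑ a, ∑ b, -(q (a, b) * Real.log (qA a)) from Fintype.sum_prod_type _]
    apply Finset.sum_congr rfl
    intro a _
    rw [pushA a, Real.negMulLog, Finset.sum_neg_distrib, ← Finset.sum_mul, neg_mul]
  have entB : ent (push Prod.snd q) = ∑ z : A × B, -(q z * Real.log (qB z.2)) := by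
    rw [sm_ent_eq,
      show (∑ z : A × B, -(q z * Real.log (qB z.2)))
        = ∑ a, ∑ b, -(q (a, b) * Real.log (qB b)) from Fintype.sum_prod_type _,
      Finset.sum_comm]
    apply Finset.sum_congr rfl
    intro b _
    rw [pushB b, Real.negMulLog, Finset.sum_neg_distrib, ← Finset.sum_mul, neg_mul]
  have entC : ent (push (fun z : A × B => u z.1) q)
      = ∑ z : A × B, -(q z * Real.log (qC (u z.1))) := by
    rw [sm_ent_eq]
    simp only [pushC]
    have perc : ∀ c, Real.negMulLog (qC c)
        = ∑ z : A × B, (if u z.1 = c then -(q z * Real.log (qC c)) else 0) := by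
      intro c
      have : ∀ z : A × B, (if u z.1 = c then -(q z * Real.log (qC c)) else 0)
          = -((if u z.1 = c then q z else 0) * Real.log (qC c)) := by
        intro z
        by_cases h : u z.1 = c <;> simp [h]
      simp only [this]
      rw [Finset.sum_neg_distrib, ← Finset.sum_mul, Real.negMulLog, neg_mul, hqC]
    simp only [perc]
    rw [Finset.sum_comm]
    apply Finset.sum_congr rfl
    intro z _
    simp [Finset.sum_ite_eq]
  -- assemble
  rw [entA, entB, entC, sm_ent_eq]
  have hstar := Finset.sum_le_sum fun z (_ : z ∈ Finset.univ) => star z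
  rw [Finset.sum_add_distrib, Finset.sum_sub_distrib, hq1] at hstar
  have hlogm : ∑ z : A × B, -(q z * Real.log (m z)) =
      ∑ z : A × B, (-(q z * Real.log (qA z.1)) + -(q z * Real.log (qB z.2))
        + q z * Real.log (qC (u z.1))) := by
    apply Finset.sum_congr rfl
    intro z _
    rw [logm z]
    ring
  rw [hlogm, Finset.sum_add_distrib, Finset.sum_add_distrib] at hstar
  have hneg : ∑ z : A × B, q z * Real.log (qC (u z.1))
      = -∑ z : A × B, -(q z * Real.log (qC (u z.1))) := by
    simp
  rw [hneg] at hstar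
  linarith [summ]

end SmAux


/-- Subspace submodularity:
`H[π_{V₁}(X)] + H[π_{V₂}(X)] ≥ H[π_{V₁+V₂}(X)] + H[π_{V₁∩V₂}(X)]`. -/
theorem statement7 (n : ℕ) (p : Fvec n → ℝ) (hp : IsDist p)
    (V₁ V₂ : Submodule (ZMod 2) (Fvec n)) :
    ent (push V₁.mkQ p) + ent (push V₂.mkQ p) ≥
      ent (push (V₁ + V₂).mkQ p) + ent (push (V₁ ⊓ V₂).mkQ p) := by
  classical
  obtain ⟨hp0, hp1⟩ := hp
  haveI fQ1 : Fintype (Fvec n ⧸ V₁) := Fintype.ofFinite _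
  haveI fQ2 : Fintype (Fvec n ⧸ V₂) := Fintype.ofFinite _
  haveI fQS : Fintype (Fvec n ⧸ (V₁ + V₂)) := Fintype.ofFinite _
  haveI fQI : Fintype (Fvec n ⧸ (V₁ ⊓ V₂)) := Fintype.ofFinite _
  have hp1' : ∑ x, p x = 1 := by rw [← finsum_eq_sum_of_fintype]; exact hp1
  set pair : Fvec n → (Fvec n ⧸ V₁) × (Fvec n ⧸ V₂) :=
    fun x => (V₁.mkQ x, V₂.mkQ x) with hpair
  set q := push pair p with hq
  have hq0 : ∀ z, 0 ≤ q z := fun z => sm_push_nonneg _ _ hp0 z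
  have hq1 : ∑ z, q z = 1 := by rw [hq, sm_sum_push]; exact hp1'
  have hle1 : V₁ ≤ (V₁ + V₂).comap (LinearMap.id (R := ZMod 2) (M := Fvec n)) := by
    rw [Submodule.comap_id, Submodule.add_eq_sup]; exact le_sup_left
  have hle2 : V₂ ≤ (V₁ + V₂).comap (LinearMap.id (R := ZMod 2) (M := Fvec n)) := by
    rw [Submodule.comap_id, Submodule.add_eq_sup]; exact le_sup_right
  set u : (Fvec n ⧸ V₁) → Fvec n ⧸ (V₁ + V₂) :=
    ⇑(Submodule.mapQ V₁ (V₁ + V₂) LinearMap.id hle1) with hu'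
  set v : (Fvec n ⧸ V₂) → Fvec n ⧸ (V₁ + V₂) :=
    ⇑(Submodule.mapQ V₂ (V₁ + V₂) LinearMap.id hle2) with hv'
  have hu : ∀ x, u (V₁.mkQ x) = (V₁ + V₂).mkQ x := by
    intro x; rw [hu']; simp [Submodule.mapQ_apply]
  have hv : ∀ x, v (V₂.mkQ x) = (V₁ + V₂).mkQ x := by
    intro x; rw [hv']; simp [Submodule.mapQ_apply]
  have hA : push Prod.fst q = push (⇑V₁.mkQ) p := by
    rw [hq, sm_push_push]; rfl
  have hB : push Prod.snd q = push (⇑V₂.mkQ) p := by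
    rw [hq, sm_push_push]; rfl
  have hC : push (fun z => u z.1) q = push (⇑(V₁ + V₂).mkQ) p := by
    rw [hq, sm_push_push]
    have : ((fun z : (Fvec n ⧸ V₁) × (Fvec n ⧸ V₂) => u z.1) ∘ pair)
        = ⇑(V₁ + V₂).mkQ := funext fun x => hu x
    rw [this]
  have hcc : ∀ a b, q (a, b) ≠ 0 → u a = v b := by
    intro a b hab
    rw [hq, sm_push_apply] at hab
    obtain ⟨x, -, hx⟩ := Finset.exists_ne_zero_of_sum_ne_zero hab
    have hx' : pair x = (a, b) := by
      by_contra h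
      rw [if_neg h] at hx
      exact hx rfl
    have h1 : V₁.mkQ x = a := congrArg Prod.fst hx'
    have h2 : V₂.mkQ x = b := congrArg Prod.snd hx'
    rw [← h1, ← h2, hu x, hv x]
  have main := sm_gibbs q hq0 hq1 u v hcc
  rw [hA, hB, hC] at main
  have hD : ∀ x y : Fvec n, pair x = pair y → (V₁ ⊓ V₂).mkQ x = (V₁ ⊓ V₂).mkQ y := by
    intro x y h
    have h1 : V₁.mkQ x = V₁.mkQ y := congrArg Prod.fst h
    have h2 : V₂.mkQ x = V₂.mkQ y := congrArg Prod.snd h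
    have m1 : x - y ∈ V₁ := (Submodule.Quotient.eq V₁).mp (by simpa using h1)
    have m2 : x - y ∈ V₂ := (Submodule.Quotient.eq V₂).mp (by simpa using h2)
    have hm12 : x - y ∈ V₁ ⊓ V₂ := Submodule.mem_inf.mpr ⟨m1, m2⟩
    simpa using (Submodule.Quotient.eq (V₁ ⊓ V₂)).mpr hm12
  obtain ⟨ψ, hψ⟩ := sm_factor pair (⇑(V₁ ⊓ V₂).mkQ) hD
  have hIq : push (⇑(V₁ ⊓ V₂).mkQ) p = push ψ q := by
    rw [hq, sm_push_push]
    have : (ψ ∘ pair) = ⇑(V₁ ⊓ V₂).mkQ := funext fun x => hψ x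
    rw [this]
  have hI : ent (push (⇑(V₁ ⊓ V₂).mkQ) p) ≤ ent q := by
    rw [hIq]
    exact sm_ent_push_le ψ q hq0
  linarith [main, hI]
end
end

section
/- Let X and Y be independent finitely supported random variables on G = 𝔽₂ⁿ, let V ⊆ G be a subspace and write π = π_V. Then the fibring identity holds: s[X; Y] = s[π(X); π(Y)] + s[X | π(X); Y | π(Y)] − I[X + Y : (π(X), π(Y)) | π(X + Y)]. -/
open Real Pointwise

noncomputable section

/-!
Expand each entropy by the chain rule `H[X] = H[π X] + H[X | π X]`. Conditionally on
`(π X, π Y) = (u, w)`, the sum `X + Y` is distributed as `X_u + Y_w` with independent fibres, so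
`s[X | π X; Y | π Y] = H[X | π X] + H[Y | π Y] - H[X + Y | π X, π Y]`. As `π (X + Y)` is a
function both of `X + Y` and of `(π X, π Y)`, the conditional mutual information collapses to
`H[X + Y] - H[X + Y | π X, π Y] - H[π X + π Y]`. Summing up, everything cancels except
`H[X] + H[Y] - H[X + Y]`.
-/

open Finset
open scoped Classical

section Distributions

variable {α β γ δ : Type*}

lemma ent_eq_sum [Fintype α] (p : α → ℝ) : ent p = ∑ a, negMulLog (p a) :=
  finsum_eq_sum_of_fintype _

lemma push_apply [Fintype α] (f : α → β) (p : α → ℝ) (b : β) :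
    push f p b = ∑ a with f a = b, p a := by
  rw [push, finsum_mem_eq_finite_toFinset_sum _ (Set.toFinite _)]
  congr 1
  ext a
  simp

lemma push_nonneg [Fintype α] {p : α → ℝ} (hp : ∀ a, 0 ≤ p a) (f : α → β) (b : β) :
    0 ≤ push f p b := by
  rw [push_apply]
  exact sum_nonneg fun a _ => hp a

lemma sum_push [Fintype α] [Fintype β] (f : α → β) (p : α → ℝ) :
    ∑ b, push f p b = ∑ a, p a := by
  simp only [push_apply]
  exact sum_fiberwise _ _ _

lemma IsDist.push [Fintype α] [Fintype β] {p : α → ℝ} (hp : IsDist p) (f : α → β) :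
    IsDist (_root_.push f p) :=
  ⟨push_nonneg hp.1 f, by
    rw [finsum_eq_sum_of_fintype, sum_push, ← finsum_eq_sum_of_fintype, hp.2]⟩

lemma push_push [Fintype α] [Fintype β] (f : α → β) (g : β → γ) (p : α → ℝ) :
    push g (push f p) = push (g ∘ f) p := by
  funext c
  simp only [push_apply]
  refine (sum_fiberwise_eq_sum_filter univ {b | g b = c} f p).trans ?_
  simp

lemma push_apply_of_injective [Fintype α] {f : α → β} (hf : f.Injective) (p : α → ℝ)
    (a : α) : push f p (f a) = p a := by
  rw [push_apply, sum_eq_single a] <;> simp +contextual [hf.eq_iff]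

lemma ent_push_of_injective [Fintype α] [Fintype β] {f : α → β} (hf : f.Injective)
    (p : α → ℝ) : ent (push f p) = ent p := by
  rw [ent_eq_sum, ent_eq_sum]
  refine (Fintype.sum_of_injective f hf _ _ (fun b hb => ?_) fun a => ?_).symm
  · rw [push_apply, sum_eq_zero fun a ha => absurd ⟨a, (mem_filter.1 ha).2⟩ hb,
      negMulLog_zero]
  · rw [push_apply_of_injective hf]

lemma ent_push_comp_of_injective [Fintype α] [Fintype β] [Fintype γ] {g : β → γ}
    (hg : g.Injective) (f : α → β) (p : α → ℝ) :
    ent (push (g ∘ f) p) = ent (push f p) := by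
  rw [← push_push, ent_push_of_injective hg]

lemma push_prodMap [Fintype α] [Fintype γ] (f : α → β) (g : γ → δ) (p : α → ℝ) (q : γ → ℝ) :
    push (Prod.map f g) (prodDist p q) = prodDist (push f p) (push g q) := by
  funext z
  simp only [push_apply, prodDist, sum_mul_sum]
  rw [← sum_product']
  congr 1
  ext
  simp [Prod.ext_iff]

lemma IsDist.sum_eq_one [Fintype α] {p : α → ℝ} (hp : IsDist p) : ∑ a, p a = 1 := by
  rw [← finsum_eq_sum_of_fintype, hp.2]

lemma conv_eq_push_add [AddCommGroup α] [Fintype α] (p q : α → ℝ) :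
    conv p q = push (fun z : α × α => z.1 + z.2) (prodDist p q) := by
  funext s
  rw [conv, finsum_eq_sum_of_fintype, push_apply, sum_filter, Fintype.sum_prod_type]
  simp [prodDist, ← eq_sub_iff_add_eq']

lemma push_conv [AddCommGroup α] [AddCommGroup β] [Fintype α] [Fintype β] (f : α →+ β)
    (p q : α → ℝ) : push f (conv p q) = conv (push f p) (push f q) := by
  rw [conv_eq_push_add, conv_eq_push_add, push_push, ← push_prodMap, push_push]
  congr 1
  funext z
  exact map_add f z.1 z.2

end Distributions

section ChainRule

variable {α β : Type*}

lemma condEnt_eq_sum [Fintype β] (r : α × β → ℝ) :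
    condEnt r = ∑ b, push Prod.snd r b * ent (fiber r b) :=
  finsum_eq_sum_of_fintype _

lemma push_snd_apply [Fintype α] [Fintype β] (r : α × β → ℝ) (b : β) :
    push Prod.snd r b = ∑ a, r (a, b) := by
  rw [push_apply, sum_filter, Fintype.sum_prod_type_right, sum_eq_single b] <;>
    simp +contextual

lemma push_snd_mul_fiber [Fintype α] [Fintype β] {r : α × β → ℝ} (hr : ∀ z, 0 ≤ r z)
    (a : α) (b : β) : push Prod.snd r b * fiber r b a = r (a, b) := by
  -- where the marginal vanishes, `fiber r b = r (·, b) / 0` is `0`, and so is `r (·, b)`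
  by_cases hb : push Prod.snd r b = 0
  · have hzero : r (a, b) = 0 := by
      rw [push_snd_apply, sum_eq_zero_iff_of_nonneg fun a _ => hr (a, b)] at hb
      exact hb a (mem_univ a)
    rw [hb, zero_mul, hzero]
  · exact mul_div_cancel₀ _ hb

lemma sum_fiber [Fintype α] [Fintype β] {r : α × β → ℝ} {b : β}
    (hb : push Prod.snd r b ≠ 0) : ∑ a, fiber r b a = 1 := by
  simp only [fiber, ← sum_div, ← push_snd_apply, div_self hb]

lemma ent_eq_ent_push_snd_add_condEnt [Fintype α] [Fintype β] {r : α × β → ℝ}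
    (hr : ∀ z, 0 ≤ r z) : ent r = ent (push Prod.snd r) + condEnt r := by
  rw [condEnt_eq_sum, ent_eq_sum, ent_eq_sum, Fintype.sum_prod_type_right, ← sum_add_distrib]
  refine sum_congr rfl fun b _ => ?_
  set P := push Prod.snd r b with hP
  have hmass : (∑ a, fiber r b a) * negMulLog P = negMulLog P := by
    by_cases hb : P = 0
    · rw [hb, negMulLog_zero, mul_zero]
    · rw [sum_fiber hb, one_mul]
  calc ∑ a, negMulLog (r (a, b))
      = ∑ a, (fiber r b a * negMulLog P + P * negMulLog (fiber r b a)) := by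
        simp only [← push_snd_mul_fiber hr, negMulLog_mul, ← hP]
    _ = negMulLog P + P * ent (fiber r b) := by
        rw [sum_add_distrib, ← sum_mul, hmass, ent_eq_sum, mul_sum]

lemma ent_eq_ent_push_add_condEnt_graph [Fintype α] [Fintype β] {p : α → ℝ}
    (hp : ∀ a, 0 ≤ p a) (f : α → β) :
    ent p = ent (push f p) + condEnt (push (fun a => (a, f a)) p) := by
  have hinj : (fun a => (a, f a)).Injective := fun a a' h => congrArg Prod.fst h
  rw [← ent_push_of_injective hinj p, ent_eq_ent_push_snd_add_condEnt (push_nonneg hp _),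
    push_push]
  rfl

end ChainRule

section ConditionalMutualInformation

variable {Ω Z B S : Type*}

lemma condMI_push_of_determined [Fintype Ω] [Fintype Z] [Fintype B] [Fintype S]
    {μ : Ω → ℝ} (hμ : ∀ ω, 0 ≤ μ ω) (φ : Ω → Z) (ψ : Ω → B) (σ : Ω → S)
    {g : Z → S} {h : B → S} (hg : ∀ ω, σ ω = g (φ ω)) (hh : ∀ ω, σ ω = h (ψ ω)) :
    condMI (push (fun ω => (φ ω, ψ ω, σ ω)) μ)
      = ent (push φ μ) - condEnt (push (fun ω => (φ ω, ψ ω)) μ) - ent (push σ μ) := by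
  have hZS : (fun z : Z × B × S => (z.1, z.2.2)) ∘ (fun ω => (φ ω, ψ ω, σ ω))
      = (fun x => (x, g x)) ∘ φ := funext fun ω => by simp [hg]
  have hBS : (fun z : Z × B × S => z.2) ∘ (fun ω => (φ ω, ψ ω, σ ω))
      = (fun y => (y, h y)) ∘ ψ := funext fun ω => by simp [hh]
  have hZBS : (fun ω => (φ ω, ψ ω, σ ω))
      = (fun t : Z × B => (t.1, t.2, h t.2)) ∘ (fun ω => (φ ω, ψ ω)) :=
    funext fun ω => by simp [hh]
  have hS : (fun z : Z × B × S => z.2.2) ∘ (fun ω => (φ ω, ψ ω, σ ω)) = σ := rfl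
  have hpair := ent_eq_ent_push_snd_add_condEnt (push_nonneg hμ fun ω => (φ ω, ψ ω))
  rw [push_push, show Prod.snd ∘ (fun ω => (φ ω, ψ ω)) = ψ from rfl] at hpair
  rw [condMI, push_push, push_push, push_push, hZS, hBS, hS, hZBS,
    ent_push_comp_of_injective, ent_push_comp_of_injective, ent_push_comp_of_injective, hpair]
  · ring
  all_goals exact fun _ _ hxy => by simp_all [Prod.ext_iff]

end ConditionalMutualInformation

section ConditionalDoubling

variable {α U W : Type*} [AddCommGroup α] [Fintype α] [Fintype U] [Fintype W]

lemma push_add_prodDist_apply (r₁ : α × U → ℝ) (r₂ : α × W → ℝ) (s : α) (u : U) (w : W) :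
    push (fun z : (α × U) × (α × W) => (z.1.1 + z.2.1, (z.1.2, z.2.2))) (prodDist r₁ r₂)
      (s, (u, w)) = conv (fun x => r₁ (x, u)) (fun y => r₂ (y, w)) s := by
  rw [conv, finsum_eq_sum_of_fintype, push_apply, sum_filter]
  simp [Fintype.sum_prod_type, prodDist, Prod.ext_iff, ← eq_sub_iff_add_eq', ite_and]

lemma push_snd_push_add_prodDist (r₁ : α × U → ℝ) (r₂ : α × W → ℝ) :
    push Prod.snd
        (push (fun z : (α × U) × (α × W) => (z.1.1 + z.2.1, (z.1.2, z.2.2))) (prodDist r₁ r₂))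
      = prodDist (push Prod.snd r₁) (push Prod.snd r₂) := by
  rw [push_push, ← push_prodMap]
  rfl

lemma fiber_push_add_prodDist (r₁ : α × U → ℝ) (r₂ : α × W → ℝ) (u : U) (w : W) :
    fiber (push (fun z : (α × U) × (α × W) => (z.1.1 + z.2.1, (z.1.2, z.2.2)))
        (prodDist r₁ r₂)) (u, w) = conv (fiber r₁ u) (fiber r₂ w) := by
  -- no positivity needed: where a marginal vanishes, both sides are `0` by `x / 0 = 0`
  funext s
  simp only [fiber, push_add_prodDist_apply, push_snd_push_add_prodDist, prodDist, conv,
    finsum_eq_sum_of_fintype, sum_div, div_mul_div_comm]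

lemma condEnt_push_add_prodDist (r₁ : α × U → ℝ) (r₂ : α × W → ℝ) :
    condEnt (push (fun z : (α × U) × (α × W) => (z.1.1 + z.2.1, (z.1.2, z.2.2)))
        (prodDist r₁ r₂))
      = ∑ u, ∑ w, push Prod.snd r₁ u * push Prod.snd r₂ w *
          ent (conv (fiber r₁ u) (fiber r₂ w)) := by
  rw [condEnt_eq_sum, push_snd_push_add_prodDist, Fintype.sum_prod_type]
  simp only [fiber_push_add_prodDist, prodDist]

theorem sCond_eq_condEnt_sub {r₁ : α × U → ℝ} {r₂ : α × W → ℝ} (h₁ : IsDist r₁)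
    (h₂ : IsDist r₂) :
    sCond r₁ r₂ = condEnt r₁ + condEnt r₂ -
      condEnt (push (fun z : (α × U) × (α × W) => (z.1.1 + z.2.1, (z.1.2, z.2.2)))
        (prodDist r₁ r₂)) := by
  set P := push Prod.snd r₁
  set Q := push Prod.snd r₂
  have hP : ∑ u, P u = 1 := (h₁.push Prod.snd).sum_eq_one
  have hQ : ∑ w, Q w = 1 := (h₂.push Prod.snd).sum_eq_one
  rw [condEnt_push_add_prodDist, condEnt_eq_sum, condEnt_eq_sum]
  calc sCond r₁ r₂
      = ∑ u, ∑ w, (P u * ent (fiber r₁ u)) * Q w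
          + ∑ u, ∑ w, P u * (Q w * ent (fiber r₂ w))
          - ∑ u, ∑ w, P u * Q w * ent (conv (fiber r₁ u) (fiber r₂ w)) := by
        simp only [sCond, finsum_eq_sum_of_fintype, sDouble, ← sum_add_distrib,
          ← sum_sub_distrib]
        exact sum_congr rfl fun u _ => sum_congr rfl fun w _ => by ring
    _ = (∑ u, P u * ent (fiber r₁ u)) * ∑ w, Q w
          + (∑ u, P u) * ∑ w, Q w * ent (fiber r₂ w)
          - ∑ u, ∑ w, P u * Q w * ent (conv (fiber r₁ u) (fiber r₂ w)) := by
        rw [sum_mul_sum, sum_mul_sum]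
    _ = _ := by rw [hP, hQ, mul_one, one_mul]

end ConditionalDoubling

theorem sDouble_eq_fibring {α β : Type*} [AddCommGroup α] [AddCommGroup β] [Finite α]
    [Finite β] (f : α →+ β) {p q : α → ℝ} (hp : IsDist p) (hq : IsDist q) :
    sDouble p q =
      sDouble (push f p) (push f q)
          + sCond (push (fun x => (x, f x)) p) (push (fun x => (x, f x)) q) -
        condMI (push (fun z : α × α => (z.1 + z.2, ((f z.1, f z.2), f (z.1 + z.2))))
          (prodDist p q)) := by
  cases nonempty_fintype α
  cases nonempty_fintype β
  have hμ : ∀ z, 0 ≤ prodDist p q z := fun z => mul_nonneg (hp.1 z.1) (hq.1 z.2)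
  have hjoint : push (fun z : (α × β) × (α × β) => (z.1.1 + z.2.1, (z.1.2, z.2.2)))
      (prodDist (push (fun x => (x, f x)) p) (push (fun x => (x, f x)) q))
      = push (fun z : α × α => (z.1 + z.2, (f z.1, f z.2))) (prodDist p q) := by
    rw [← push_prodMap, push_push]
    rfl
  have hsum : ent (push (fun z : α × α => f (z.1 + z.2)) (prodDist p q))
      = ent (conv (push f p) (push f q)) := by
    rw [← push_conv, conv_eq_push_add, push_push]
    rfl
  rw [condMI_push_of_determined hμ (fun z => z.1 + z.2) (fun z => (f z.1, f z.2))
      (fun z => f (z.1 + z.2)) (g := f) (h := fun w => w.1 + w.2) (fun _ => rfl)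
      (fun z => map_add f z.1 z.2),
    sCond_eq_condEnt_sub (hp.push _) (hq.push _), hjoint, hsum, ← conv_eq_push_add, sDouble,
    sDouble, ent_eq_ent_push_add_condEnt_graph hp.1 f, ent_eq_ent_push_add_condEnt_graph hq.1 f]
  ring

/-- The fibring identity: for independent `X ∼ p`, `Y ∼ q` and `π = π_V`,
`s[X; Y] = s[π(X); π(Y)] + s[X | π(X); Y | π(Y)] − I[X+Y : (π(X), π(Y)) | π(X+Y)]`. -/
theorem statement8 (n : ℕ) (p q : Fvec n → ℝ) (hp : IsDist p) (hq : IsDist q)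
    (V : Submodule (ZMod 2) (Fvec n)) :
    sDouble p q =
      sDouble (push V.mkQ p) (push V.mkQ q) + sCond (selfProj V p) (selfProj V q) -
        condMI (push (fun z : Fvec n × Fvec n =>
          (z.1 + z.2, ((V.mkQ z.1, V.mkQ z.2), V.mkQ (z.1 + z.2)))) (prodDist p q)) :=
  sDouble_eq_fibring V.mkQ.toAddMonoidHom hp hq
end
end

section
/- If η' > η + ε, then statement B(η, ε, L) implies statement A(η', L, η' − η − ε). -/
open Real Pointwise

noncomputable section

section Helpers

variable {A B : Type*}

lemma isDist_support_finite {p : A → ℝ} (hp : IsDist p) : (Function.support p).Finite := by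
  by_contra hf
  have h0 : ∑ᶠ a, p a = 0 := finsum_of_infinite_support hf
  rw [hp.2] at h0; norm_num at h0

lemma isDist_le_one {p : A → ℝ} (hp : IsDist p) (a : A) : p a ≤ 1 := by
  have := single_le_finsum a (isDist_support_finite hp) hp.1
  rwa [hp.2] at this

lemma ent_nonneg {p : A → ℝ} (hp : IsDist p) : 0 ≤ ent p :=
  finsum_nonneg fun a => Real.negMulLog_nonneg (hp.1 a) (isDist_le_one hp a)

lemma negMulLog_add_le' {x y : ℝ} (hx : 0 ≤ x) (hy : 0 ≤ y) :
    Real.negMulLog (x + y) ≤ Real.negMulLog x + Real.negMulLog y := by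
  have key : ∀ a b : ℝ, 0 ≤ a → 0 ≤ b → a * Real.log a ≤ a * Real.log (a + b) := by
    intro a b ha hb
    rcases ha.eq_or_lt with h | h
    · simp [← h]
    · exact mul_le_mul_of_nonneg_left (Real.log_le_log h (by linarith)) ha
  have h1 := key x y hx hy
  have h2 := key y x hy hx
  rw [add_comm y x] at h2
  simp only [Real.negMulLog, neg_mul]
  nlinarith

lemma negMulLog_sum_le' (s : Finset A) (g : A → ℝ) (hg : ∀ a ∈ s, 0 ≤ g a) :
    Real.negMulLog (∑ a ∈ s, g a) ≤ ∑ a ∈ s, Real.negMulLog (g a) := by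
  classical
  induction s using Finset.induction_on with
  | empty => simp
  | @insert a s ha ih =>
    rw [Finset.sum_insert ha, Finset.sum_insert ha]
    calc Real.negMulLog (g a + ∑ x ∈ s, g x)
        ≤ Real.negMulLog (g a) + Real.negMulLog (∑ x ∈ s, g x) :=
          negMulLog_add_le' (hg a (Finset.mem_insert_self a s))
            (Finset.sum_nonneg fun x hx => hg x (Finset.mem_insert_of_mem hx))
      _ ≤ _ := by
          gcongr
          exact ih fun x hx => hg x (Finset.mem_insert_of_mem hx)

lemma ent_eq_sum_s13 {p : A → ℝ} {s : Finset A} (hs : Function.support p ⊆ ↑s) :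
    ent p = ∑ a ∈ s, Real.negMulLog (p a) := by
  refine finsum_eq_sum_of_support_subset _ ?_
  intro a ha
  have : p a ≠ 0 := by
    intro h
    simp [Function.mem_support, h] at ha
  exact hs this

lemma push_eq_sum [DecidableEq B] (f : A → B) {p : A → ℝ} {s : Finset A}
    (hs : Function.support p ⊆ ↑s) (b : B) :
    push f p b = ∑ a ∈ s.filter (fun a => f a = b), p a := by
  refine finsum_mem_eq_sum_of_inter_support_eq _ ?_
  ext a
  simp only [Set.mem_inter_iff, Set.mem_preimage, Set.mem_singleton_iff, Finset.coe_filter,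
    Set.mem_setOf_eq, Function.mem_support]
  exact ⟨fun ⟨h1, h2⟩ => ⟨⟨hs h2, h1⟩, h2⟩, fun ⟨⟨_, h1⟩, h2⟩ => ⟨h1, h2⟩⟩

lemma push_support_subset [DecidableEq B] (f : A → B) {p : A → ℝ} {s : Finset A}
    (hs : Function.support p ⊆ ↑s) :
    Function.support (push f p) ⊆ ↑(s.image f) := by
  intro b hb
  rw [Function.mem_support, push_eq_sum f hs b] at hb
  obtain ⟨a, ha, -⟩ := Finset.exists_ne_zero_of_sum_ne_zero hb
  rw [Finset.mem_filter] at ha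
  simp only [Finset.coe_image, Set.mem_image, Finset.mem_coe]
  exact ⟨a, ha.1, ha.2⟩

lemma ent_push_le (f : A → B) {p : A → ℝ} {s : Finset A}
    (hs : Function.support p ⊆ ↑s) (hp : ∀ a, 0 ≤ p a) :
    ent (push f p) ≤ ent p := by
  classical
  rw [ent_eq_sum_s13 (push_support_subset f hs), ent_eq_sum_s13 hs,
    ← Finset.sum_fiberwise_of_maps_to (fun a ha => Finset.mem_image_of_mem f ha)
      (fun a => Real.negMulLog (p a))]
  refine Finset.sum_le_sum fun b _ => ?_
  rw [push_eq_sum f hs b]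
  exact negMulLog_sum_le' _ _ fun a _ => hp a

variable [AddCommGroup A] [AddCommGroup B]

lemma conv_eq_sum {p : A → ℝ} (q : A → ℝ) {s : Finset A}
    (hs : Function.support p ⊆ ↑s) (z : A) :
    conv p q z = ∑ x ∈ s, p x * q (z - x) := by
  refine finsum_eq_sum_of_support_subset _ ?_
  intro x hx
  have : p x ≠ 0 := fun h => by simp [Function.mem_support, h] at hx
  exact hs this

lemma conv_support_subset [DecidableEq A] {p q : A → ℝ} {s t : Finset A}
    (hs : Function.support p ⊆ ↑s) (ht : Function.support q ⊆ ↑t) :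
    Function.support (conv p q) ⊆ ↑(s + t) := by
  intro z hz
  rw [Function.mem_support, conv_eq_sum q hs z] at hz
  obtain ⟨x, hx, hne⟩ := Finset.exists_ne_zero_of_sum_ne_zero hz
  have hq : q (z - x) ≠ 0 := fun h => hne (by simp [h])
  have hzx : z = x + (z - x) := by abel
  rw [hzx]
  exact Finset.add_mem_add hx (ht hq)

lemma conv_nonneg' {p q : A → ℝ} (hp : ∀ a, 0 ≤ p a) (hq : ∀ a, 0 ≤ q a) (z : A) :
    0 ≤ conv p q z :=
  finsum_nonneg fun x => mul_nonneg (hp x) (hq _)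

lemma push_conv_s13 (f : A →+ B) {p q : A → ℝ} {s t : Finset A}
    (hs : Function.support p ⊆ ↑s) (ht : Function.support q ⊆ ↑t) :
    conv (push f p) (push f q) = push f (conv p q) := by
  classical
  funext z
  have key : conv (push f p) (push f q) z
      = ∑ a ∈ s, ∑ b ∈ t.filter (fun b => f b = z - f a), p a * q b := by
    calc conv (push f p) (push f q) z
        = ∑ x ∈ s.image f, push f p x * push f q (z - x) :=
          conv_eq_sum (push f q) (push_support_subset f hs) z
      _ = ∑ x ∈ s.image f, ∑ a ∈ s.filter (fun a => f a = x), p a * push f q (z - f a) := by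
          refine Finset.sum_congr rfl fun x _ => ?_
          rw [push_eq_sum f hs x, Finset.sum_mul]
          exact Finset.sum_congr rfl fun a ha => by rw [(Finset.mem_filter.mp ha).2]
      _ = ∑ a ∈ s, p a * push f q (z - f a) :=
          Finset.sum_fiberwise_of_maps_to (fun a ha => Finset.mem_image_of_mem f ha) _
      _ = ∑ a ∈ s, ∑ b ∈ t.filter (fun b => f b = z - f a), p a * q b := by
          refine Finset.sum_congr rfl fun a _ => ?_
          rw [push_eq_sum f ht (z - f a), Finset.mul_sum]
  rw [key, push_eq_sum f (conv_support_subset hs ht) z]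
  have expand : ∀ w, conv p q w = ∑ a ∈ s, p a * q (w - a) := fun w => conv_eq_sum q hs w
  simp only [expand]
  rw [Finset.sum_comm]
  refine Finset.sum_congr rfl fun a ha => ?_
  conv_lhs => rw [← Finset.sum_filter_of_ne (p := fun b => q b ≠ 0)
      (fun b _ hb => fun h0 => hb (by rw [h0, mul_zero]))]
  conv_rhs => rw [← Finset.sum_filter_of_ne (p := fun w => q (w - a) ≠ 0)
      (fun w _ hw => fun h0 => hw (by rw [h0, mul_zero]))]
  refine Finset.sum_nbij' (fun b => a + b) (fun w => w - a) ?_ ?_ ?_ ?_ ?_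
  · intro b hb
    simp only [Finset.mem_filter] at hb ⊢
    refine ⟨⟨Finset.add_mem_add ha hb.1.1, ?_⟩, ?_⟩
    · rw [map_add, hb.1.2]; abel
    · rw [add_sub_cancel_left]; exact hb.2
  · intro w hw
    simp only [Finset.mem_filter] at hw ⊢
    refine ⟨⟨ht hw.2, ?_⟩, hw.2⟩
    rw [map_sub, hw.1.2]
  · intro b _; rw [add_sub_cancel_left]
  · intro w _; rw [add_sub_cancel]
  · intro b _; rw [add_sub_cancel_left]

end Helpers

/-- If `η' > η + ε`, then `B(η, ε, L)` implies `A(η', L, η' − η − ε)`. -/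
theorem statement13 (η ε L η' : ℝ) (hη : η ∈ Set.Ioc (0 : ℝ) (1 / 2))
    (hε : ε ∈ Set.Ioc (0 : ℝ) 1) (hL : 0 ≤ L) (hη' : η' ∈ Set.Ioc (0 : ℝ) (1 / 2))
    (h : η' > η + ε) (hB : StB η ε L) : StA η' L (η' - η - ε) := by
  classical
  intro n p q hp hq hconv
  obtain ⟨V, hV1, hV2⟩ := hB n p q hp hq
  refine ⟨V, hV1, ?_⟩
  set S := ent p + ent q with hSdef
  have hS : 0 ≤ S := add_nonneg (ent_nonneg hp) (ent_nonneg hq)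
  have hsp : Function.support p ⊆ ↑(isDist_support_finite hp).toFinset := by simp
  have hsq : Function.support q ⊆ ↑(isDist_support_finite hq).toFinset := by simp
  have hmkQ : ⇑V.mkQ = ⇑V.mkQ.toAddMonoidHom := rfl
  have key : ent (conv (push V.mkQ p) (push V.mkQ q)) ≤ ent (conv p q) := by
    rw [hmkQ, push_conv_s13 V.mkQ.toAddMonoidHom hsp hsq]
    exact ent_push_le _ (conv_support_subset hsp hsq) (conv_nonneg' hp.1 hq.1)
  have h1 : (1 - η) * (ent (push V.mkQ p) + ent (push V.mkQ q)) - ε * S ≤ (1 - η') * S :=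
    le_trans (le_trans hV2 key) hconv
  have hc1 : 0 ≤ η' - η - ε := by linarith
  have hint : 0 ≤ η * (η' - η - ε) * S := mul_nonneg (mul_nonneg hη.1.le hc1) hS
  nlinarith [hη.1, hη.2, hη'.1, hη'.2, hε.1]
end
end
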